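/- Let B_1,...,B_n be independent Bernoulli random variables with B_i ~ Bernoulli(ρ_i) and min_i ρ_i ≥ ρ > 0. Let J be a stopping time in reverse time with respect to F_j = σ(B_1+...+B_j, B_{j+1},...,B_n). Then E[(1+J)/(1+B_1+...+B_J)] ≤ ρ^{-1}. -/

import Mathlib

/-!
Write `ρᵢ = pᵢ ρ + (1 - pᵢ)`. Then `Bᵢ` can be sampled by first choosing, independently with
probability `pᵢ`, whether `i` belongs to the random set `A`; coordinates in `A` are
Bernoulli(`ρ`) and the others are `1`. Given `A`, the ones forced outside `A` add the same amount
to the numerator and the denominator of `(1 + J) / (1 + S_J)`, so this ratio is at most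
`Z_J`, where `Z_j = (1 + #(A ∩ [1, j])) / (1 + #(successes in A ∩ [1, j]))`.

For the i.i.d. coordinates in `A`, `Z` is a reverse supermartingale: given the reverse
σ-algebra at time `j + 1`, swapping coordinate `j + 1` with any `i ∈ A ∩ [1, j + 1]` preserves
the law, and averaging `Z_j` over these swaps gives at most `Z_{j+1}`. Optional stopping bounds
`E[Z_J]` by `E[Z_n] = (1 - (1 - ρ)^{#A + 1}) / ρ ≤ ρ⁻¹`.

Everything is a finite sum over success sets `b ⊆ [1, n]`, on which `J` becomes a reverse
stopping rule `τ`.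
-/

open Finset MeasureTheory ProbabilityTheory

theorem sum_powerset_pow_mul_div_card_le {α : Type*} {ρ : ℝ} (hρ : 0 < ρ) (hρ1 : ρ ≤ 1)
    (a : Finset α) :
    ∑ q ∈ a.powerset, ρ ^ #q * (1 - ρ) ^ (#a - #q) * ((1 + #a) / (1 + #q)) ≤ ρ⁻¹ := by
  have hterm (N k : ℕ) : N.choose k • (ρ ^ k * (1 - ρ) ^ (N - k) * ((1 + N) / (1 + k))) * ρ
      = ρ ^ (k + 1) * (1 - ρ) ^ (N - k) * (N + 1).choose (k + 1) := by
    have hchoose : (N.choose k : ℝ) * (1 + N) / (1 + k) = (N + 1).choose (k + 1) := by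
      rw [div_eq_iff (by positivity)]
      exact_mod_cast (Nat.add_one_mul_choose_eq N k).symm.trans (by ring) |>.symm.trans (by ring)
    rw [nsmul_eq_mul, ← hchoose]
    ring
  have hbinom (N : ℕ) :
      ∑ k ∈ range (N + 1), ρ ^ (k + 1) * (1 - ρ) ^ (N - k) * (N + 1).choose (k + 1)
        = 1 - (1 - ρ) ^ (N + 1) := by
    have := add_pow ρ (1 - ρ) (N + 1)
    rw [add_sub_cancel, one_pow, sum_range_succ' _ (N + 1)] at this
    simp only [Nat.add_sub_add_right, pow_zero, Nat.choose_zero_right, Nat.sub_zero,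
      Nat.cast_one, one_mul, mul_one] at this
    linarith
  rw [← one_div, le_div_iff₀ hρ,
    sum_powerset_apply_card (fun k => ρ ^ k * (1 - ρ) ^ (#a - k) * ((1 + #a) / (1 + k))),
    sum_mul, sum_congr rfl fun k _ => hterm #a k, hbinom]
  linarith [pow_nonneg (sub_nonneg.mpr hρ1) (#a + 1)]

section Swap

variable {α : Type*} [DecidableEq α] {s : Finset α} {i k : α}

lemma map_swap_inter_of_mem (hi : i ∈ s) (hk : k ∈ s) (q : Finset α) :
    q.map (Equiv.swap i k).toEmbedding ∩ s = (q ∩ s).map (Equiv.swap i k).toEmbedding := by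
  ext x
  simp only [mem_inter, mem_map_equiv, Equiv.symm_swap]
  refine and_congr_right fun _ => ?_
  rcases eq_or_ne x i with rfl | hxi
  · simp [hi, hk]
  rcases eq_or_ne x k with rfl | hxk
  · simp [hi, hk]
  rw [Equiv.swap_apply_of_ne_of_ne hxi hxk]

lemma map_swap_sdiff_of_mem (hi : i ∈ s) (hk : k ∈ s) (q : Finset α) :
    q.map (Equiv.swap i k).toEmbedding \ s = q \ s := by
  ext x
  simp only [mem_sdiff, mem_map_equiv, Equiv.symm_swap]
  refine ⟨fun ⟨hx, hxs⟩ => ?_, fun ⟨hx, hxs⟩ => ?_⟩ <;>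
  · rw [Equiv.swap_apply_of_ne_of_ne (ne_of_mem_of_not_mem hi hxs).symm
      (ne_of_mem_of_not_mem hk hxs).symm] at *
    exact ⟨hx, hxs⟩

lemma map_swap_subset (hi : i ∈ s) (hk : k ∈ s) {q : Finset α} (hq : q ⊆ s) :
    q.map (Equiv.swap i k).toEmbedding ⊆ s := by
  rw [← inter_eq_left, map_swap_inter_of_mem hi hk, inter_eq_left.mpr hq]

lemma map_swap_map_swap (q : Finset α) :
    (q.map (Equiv.swap i k).toEmbedding).map (Equiv.swap i k).toEmbedding = q := by
  ext x
  simp [mem_map_equiv]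

lemma mem_map_swap_right (q : Finset α) : k ∈ q.map (Equiv.swap i k).toEmbedding ↔ i ∈ q := by
  simp [mem_map_equiv]

end Swap

/-- `b` and `b'` lie in the same atom of the reverse σ-algebra
`σ(#(· ∩ [1, j]), membership of i for i > j)`. -/
def SameRevInfo (j : ℕ) (b b' : Finset ℕ) : Prop :=
  #(b ∩ Icc 1 j) = #(b' ∩ Icc 1 j) ∧ b \ Icc 1 j = b' \ Icc 1 j

/-- `{j ≤ τ}` is measurable for the reverse σ-algebra at time `j`; since these σ-algebras
decrease, this is equivalent to the same for `{τ = j}`. -/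
def IsRevStoppingRule (n : ℕ) (τ : Finset ℕ → ℕ) : Prop :=
  ∀ ⦃j⦄, 1 ≤ j → j ≤ n → ∀ ⦃b b'⦄, SameRevInfo j b b' → j ≤ τ b → j ≤ τ b'

lemma SameRevInfo.trans {j : ℕ} {b b' b'' : Finset ℕ} (h : SameRevInfo j b b')
    (h' : SameRevInfo j b' b'') : SameRevInfo j b b'' :=
  ⟨h.1.trans h'.1, h.2.trans h'.2⟩

lemma SameRevInfo.mono {j k : ℕ} {b b' : Finset ℕ} (h : SameRevInfo j b b') (hjk : j ≤ k) :
    SameRevInfo k b b' := by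
  have hI : Icc 1 j ⊆ Icc 1 k := Icc_subset_Icc_right hjk
  have hsplit (c : Finset ℕ) : #(c ∩ Icc 1 k) = #(c ∩ Icc 1 j) + #((c \ Icc 1 j) ∩ Icc 1 k) := by
    rw [← card_union_of_disjoint
      (disjoint_sdiff_self_right.mono inter_subset_right inter_subset_left)]
    congr 1
    ext x; simp only [mem_inter, mem_union, mem_sdiff]; have := @hI x; tauto
  have hsdiff (c : Finset ℕ) : c \ Icc 1 k = (c \ Icc 1 j) \ Icc 1 k := by
    rw [sdiff_sdiff_left, sup_eq_right.mpr hI]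
  exact ⟨by rw [hsplit, hsplit b', h.1, h.2], by rw [hsdiff, hsdiff b', h.2]⟩

lemma SameRevInfo.union_left {j : ℕ} {b b' : Finset ℕ} (h : SameRevInfo j b b') {c : Finset ℕ}
    (hb : Disjoint c b) (hb' : Disjoint c b') : SameRevInfo j (c ∪ b) (c ∪ b') := by
  refine ⟨?_, by rw [union_sdiff_distrib, union_sdiff_distrib, h.2]⟩
  rw [union_inter_distrib_right, union_inter_distrib_right,
    card_union_of_disjoint (hb.mono inter_subset_left inter_subset_left),
    card_union_of_disjoint (hb'.mono inter_subset_left inter_subset_left), h.1]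

lemma sameRevInfo_map_swap {i j : ℕ} (hi : i ∈ Icc 1 j) (hj : j ∈ Icc 1 j) (q : Finset ℕ) :
    SameRevInfo j (q.map (Equiv.swap i j).toEmbedding) q :=
  ⟨by rw [map_swap_inter_of_mem hi hj, card_map], map_swap_sdiff_of_mem hi hj q⟩

/-- For `q ⊆ a`, the ratio `(1 + j) / (1 + S_j)` computed on the clock of the coordinates in
`a`. -/
noncomputable def revRatio (a q : Finset ℕ) (j : ℕ) : ℝ :=
  (1 + #(a ∩ Icc 1 j)) / (1 + #(q ∩ Icc 1 j))

lemma card_inter_Icc_succ_of_mem {q : Finset ℕ} {j : ℕ} (h : j + 1 ∈ q) :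
    #(q ∩ Icc 1 (j + 1)) = #(q ∩ Icc 1 j) + 1 := by
  rw [← insert_Icc_right_eq_Icc_add_one (by omega), inter_insert_of_mem h,
    card_insert_of_notMem (by simp)]

lemma card_inter_Icc_succ_of_notMem {q : Finset ℕ} {j : ℕ} (h : j + 1 ∉ q) :
    #(q ∩ Icc 1 (j + 1)) = #(q ∩ Icc 1 j) := by
  rw [← insert_Icc_right_eq_Icc_add_one (by omega), inter_insert_of_notMem h]

lemma revRatio_succ_of_notMem {a q : Finset ℕ} {j : ℕ} (hq : q ⊆ a) (hj : j + 1 ∉ a) :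
    revRatio a q (j + 1) = revRatio a q j := by
  rw [revRatio, revRatio, card_inter_Icc_succ_of_notMem hj,
    card_inter_Icc_succ_of_notMem fun h => hj (hq h)]

lemma revRatio_map_swap {a q : Finset ℕ} {i j : ℕ} (hi : i ∈ a ∩ Icc 1 (j + 1))
    (hj : j + 1 ∈ a) :
    revRatio a (q.map (Equiv.swap i (j + 1)).toEmbedding) j
      = if i ∈ q then (#(a ∩ Icc 1 (j + 1)) : ℝ) / #(q ∩ Icc 1 (j + 1))
          else #(a ∩ Icc 1 (j + 1)) / (1 + #(q ∩ Icc 1 (j + 1))) := by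
  have hq :
      #(q.map (Equiv.swap i (j + 1)).toEmbedding ∩ Icc 1 (j + 1)) = #(q ∩ Icc 1 (j + 1)) := by
    rw [map_swap_inter_of_mem (mem_inter.mp hi).2 (by simp), card_map]
  rw [revRatio, card_inter_Icc_succ_of_mem hj, ← hq]
  split_ifs with hiq
  · rw [card_inter_Icc_succ_of_mem ((mem_map_swap_right q).mpr hiq)]
    push_cast; ring
  · rw [card_inter_Icc_succ_of_notMem (mt (mem_map_swap_right q).mp hiq)]
    push_cast; ring

lemma mul_div_add_mul_div_le {t u : ℝ} (ht : 0 ≤ t) (hu : 0 ≤ u) :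
    t * ((t + u) / t) + u * ((t + u) / (1 + t)) ≤ (t + u) * ((1 + (t + u)) / (1 + t)) := by
  rcases ht.eq_or_lt with rfl | ht
  · simp only [zero_mul, zero_add, add_zero, div_one]; nlinarith
  · apply le_of_eq; field_simp; ring

lemma sum_revRatio_map_swap_le {a q : Finset ℕ} {j : ℕ} (hq : q ⊆ a) (hj : j + 1 ∈ a) :
    ∑ i ∈ a ∩ Icc 1 (j + 1), revRatio a (q.map (Equiv.swap i (j + 1)).toEmbedding) j
      ≤ #(a ∩ Icc 1 (j + 1)) * revRatio a q (j + 1) := by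
  have hAq : (a ∩ Icc 1 (j + 1)).filter (· ∈ q) = q ∩ Icc 1 (j + 1) := by
    ext x; simp only [mem_filter, mem_inter]; have := @hq x; tauto
  have hcard := card_filter_add_card_filter_not (s := a ∩ Icc 1 (j + 1)) (· ∈ q)
  rw [hAq] at hcard
  rw [sum_congr rfl fun i hi => revRatio_map_swap hi hj, sum_ite, sum_const, sum_const, hAq,
    nsmul_eq_mul, nsmul_eq_mul, revRatio, ← hcard]
  push_cast
  exact mul_div_add_mul_div_le (Nat.cast_nonneg _) (Nat.cast_nonneg _)

/-- Averaging over the transpositions `(i, j + 1)`, `i ∈ a ∩ [1, j + 1]`, which preserve `P`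
and the weights: the reverse supermartingale inequality for `revRatio` on swap-invariant
events. -/
lemma sum_mul_revRatio_le_succ {a : Finset ℕ} {P : Finset (Finset ℕ)} {w : ℕ → ℝ} {j : ℕ}
    (hw : ∀ m, 0 ≤ w m) (hP : ∀ q ∈ P, q ⊆ a) (hj : j + 1 ∈ a)
    (hPswap : ∀ i ∈ a ∩ Icc 1 (j + 1), ∀ q ∈ P, q.map (Equiv.swap i (j + 1)).toEmbedding ∈ P) :
    ∑ q ∈ P, w #q * revRatio a q j ≤ ∑ q ∈ P, w #q * revRatio a q (j + 1) := by
  set A := a ∩ Icc 1 (j + 1)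
  have hA : (0 : ℝ) < #A := by exact_mod_cast card_pos.mpr ⟨j + 1, by simp [A, hj]⟩
  have hreindex (i) (hi : i ∈ A) : ∑ q ∈ P, w #q * revRatio a q j
      = ∑ q ∈ P, w #q * revRatio a (q.map (Equiv.swap i (j + 1)).toEmbedding) j :=
    sum_nbij' _ _ (hPswap i hi) (hPswap i hi) (fun q _ => map_swap_map_swap q)
      (fun q _ => map_swap_map_swap q) fun q _ => by rw [map_swap_map_swap, card_map]
  refine le_of_mul_le_mul_left ?_ hA
  calc #A * ∑ q ∈ P, w #q * revRatio a q j
      = ∑ i ∈ A, ∑ q ∈ P, w #q * revRatio a (q.map (Equiv.swap i (j + 1)).toEmbedding) j := by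
        rw [← nsmul_eq_mul, ← sum_const, sum_congr rfl hreindex]
    _ = ∑ q ∈ P, w #q * ∑ i ∈ A, revRatio a (q.map (Equiv.swap i (j + 1)).toEmbedding) j := by
        rw [sum_comm]; simp only [mul_sum]
    _ ≤ ∑ q ∈ P, w #q * (#A * revRatio a q (j + 1)) :=
        sum_le_sum fun q hq =>
          mul_le_mul_of_nonneg_left (sum_revRatio_map_swap_le (hP q hq) hj) (hw _)
    _ = #A * ∑ q ∈ P, w #q * revRatio a q (j + 1) := by
        rw [mul_sum]; exact sum_congr rfl fun q _ => by ring

section IID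

variable {n : ℕ} {a c : Finset ℕ} {τ : Finset ℕ → ℕ}

lemma sum_mul_revRatio_max_le_succ (ha : a ⊆ Icc 1 n) (hca : Disjoint c a)
    (hτ : IsRevStoppingRule n τ) {w : ℕ → ℝ} (hw : ∀ m, 0 ≤ w m) (j : ℕ) :
    ∑ q ∈ a.powerset, w #q * revRatio a q (max (τ (c ∪ q)) j)
      ≤ ∑ q ∈ a.powerset, w #q * revRatio a q (max (τ (c ∪ q)) (j + 1)) := by
  rw [← sum_filter_add_sum_filter_not _ (fun q => τ (c ∪ q) ≤ j)
      fun q => w #q * revRatio a q (max (τ (c ∪ q)) j),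
    ← sum_filter_add_sum_filter_not _ (fun q => τ (c ∪ q) ≤ j)
      fun q => w #q * revRatio a q (max (τ (c ∪ q)) (j + 1))]
  apply add_le_add
  · set P := a.powerset.filter fun q => τ (c ∪ q) ≤ j
    have hP (q) (hq : q ∈ P) : q ⊆ a := mem_powerset.mp (mem_filter.mp hq).1
    have hmax (k : ℕ) (hk : j ≤ k) : ∑ q ∈ P, w #q * revRatio a q (max (τ (c ∪ q)) k)
        = ∑ q ∈ P, w #q * revRatio a q k :=
      sum_congr rfl fun q hq => by rw [max_eq_right ((mem_filter.mp hq).2.trans hk)]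
    rw [hmax j le_rfl, hmax (j + 1) j.le_succ]
    by_cases hj : j + 1 ∈ a
    · refine sum_mul_revRatio_le_succ hw hP hj fun i hi q hq => ?_
      have hi' := (mem_inter.mp hi).2
      have hsub := map_swap_subset (mem_inter.mp hi).1 hj (hP q hq)
      refine mem_filter.mpr ⟨mem_powerset.mpr hsub, not_lt.mp fun hlt => ?_⟩
      have hinfo := (sameRevInfo_map_swap hi' (by simp) q).union_left
        (hca.mono_right hsub) (hca.mono_right (hP q hq))
      exact absurd (hτ (by omega) (mem_Icc.mp (ha hj)).2 hinfo hlt) (not_le.mpr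
        (Nat.lt_succ_of_le (mem_filter.mp hq).2))
    · exact le_of_eq <| sum_congr rfl fun q hq => by rw [revRatio_succ_of_notMem (hP q hq) hj]
  · refine le_of_eq (sum_congr rfl fun q hq => ?_)
    have hlt := not_le.mp (mem_filter.mp hq).2
    rw [max_eq_left hlt.le, max_eq_left hlt]

theorem sum_pow_mul_revRatio_le {ρ : ℝ} (hρ : 0 < ρ) (hρ1 : ρ ≤ 1) (ha : a ⊆ Icc 1 n)
    (hca : Disjoint c a) (hτn : ∀ b, τ b ≤ n) (hτ : IsRevStoppingRule n τ) :
    ∑ q ∈ a.powerset, ρ ^ #q * (1 - ρ) ^ (#a - #q) * revRatio a q (τ (c ∪ q)) ≤ ρ⁻¹ := by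
  set w : ℕ → ℝ := fun m => ρ ^ m * (1 - ρ) ^ (#a - m)
  have hw (m : ℕ) : 0 ≤ w m := by have := sub_nonneg.mpr hρ1; positivity
  set V : ℕ → ℝ := fun j => ∑ q ∈ a.powerset, w #q * revRatio a q (max (τ (c ∪ q)) j)
  have hV : Monotone V := monotone_nat_of_le_succ (sum_mul_revRatio_max_le_succ ha hca hτ hw)
  calc ∑ q ∈ a.powerset, ρ ^ #q * (1 - ρ) ^ (#a - #q) * revRatio a q (τ (c ∪ q))
      = V 0 := by simp only [V, w, _root_.max_zero]
    _ ≤ V n := hV n.zero_le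
    _ = ∑ q ∈ a.powerset, ρ ^ #q * (1 - ρ) ^ (#a - #q) * ((1 + #a) / (1 + #q)) := by
        refine sum_congr rfl fun q hq => ?_
        rw [max_eq_right (hτn _), revRatio, inter_eq_left.mpr ha,
          inter_eq_left.mpr ((mem_powerset.mp hq).trans ha)]
    _ ≤ ρ⁻¹ := sum_powerset_pow_mul_div_card_le hρ hρ1 a

end IID

section Bernoulli

variable {α : Type*} [DecidableEq α]

noncomputable def bernoulliWeight (s : Finset α) (r : α → ℝ) (b : Finset α) : ℝ :=
  ∏ i ∈ s, if i ∈ b then r i else 1 - r i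

variable {s : Finset α} {r : α → ℝ}

lemma bernoulliWeight_nonneg (hr0 : ∀ i, 0 ≤ r i) (hr1 : ∀ i, r i ≤ 1) (b : Finset α) :
    0 ≤ bernoulliWeight s r b :=
  prod_nonneg fun i _ => by split_ifs <;> linarith [hr0 i, hr1 i]

lemma bernoulliWeight_congr {b b' : Finset α} (h : ∀ i ∈ s, i ∈ b ↔ i ∈ b') :
    bernoulliWeight s r b = bernoulliWeight s r b' :=
  prod_congr rfl fun i hi => by simp only [h i hi]

lemma bernoulliWeight_of_subset {t : Finset α} (ht : t ⊆ s) :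
    bernoulliWeight s r t = (∏ i ∈ t, r i) * ∏ i ∈ s \ t, (1 - r i) := by
  rw [bernoulliWeight, prod_ite, filter_mem_eq_inter, inter_eq_right.mpr ht,
    filter_notMem_eq_sdiff]

lemma bernoulliWeight_const_of_subset {ρ : ℝ} {t : Finset α} (ht : t ⊆ s) :
    bernoulliWeight s (fun _ => ρ) t = ρ ^ #t * (1 - ρ) ^ (#s - #t) := by
  rw [bernoulliWeight_of_subset ht, prod_const, prod_const, card_sdiff_of_subset ht]

lemma sum_bernoulliWeight (s : Finset α) (r : α → ℝ) :
    ∑ b ∈ s.powerset, bernoulliWeight s r b = 1 := by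
  rw [sum_congr rfl fun b hb => bernoulliWeight_of_subset (mem_powerset.mp hb), ← prod_add]
  simp

/-- Bernoulli(`p i ρ + (1 - p i)`) is Bernoulli(`ρ`) with probability `p i` and `1` otherwise;
`a` is the set of coordinates that are Bernoulli(`ρ`). -/
lemma bernoulliWeight_eq_sum_mixture {p : α → ℝ} {ρ : ℝ} (hr : ∀ i, r i = p i * ρ + (1 - p i))
    (b : Finset α) :
    bernoulliWeight s r b = ∑ a ∈ s.powerset, bernoulliWeight s p a *
      if s \ a ⊆ b then bernoulliWeight a (fun _ => ρ) b else 0 := by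
  have hfactor (i : α) : (if i ∈ b then r i else 1 - r i)
      = p i * (if i ∈ b then ρ else 1 - ρ) + (1 - p i) * (if i ∈ b then 1 else 0) := by
    split_ifs <;> rw [hr] <;> ring
  rw [bernoulliWeight, prod_congr rfl fun i _ => hfactor i, prod_add]
  refine sum_congr rfl fun a ha => ?_
  rw [prod_mul_distrib, prod_mul_distrib, prod_boole,
    bernoulliWeight_of_subset (mem_powerset.mp ha), bernoulliWeight]
  by_cases h : s \ a ⊆ b
  · rw [if_pos fun i hi => h hi, if_pos h]; ring
  · rw [if_neg fun h' => h fun i hi => h' i hi, if_neg h]; ring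

lemma sdiff_union_inter_eq_of_subset {a q : Finset α} (hq : q ⊆ a) :
    (s \ a ∪ q) ∩ a = q := by
  rw [union_inter_distrib_right, sdiff_inter_self, empty_union, inter_eq_left.mpr hq]

lemma sum_powerset_ite_sdiff_subset {β : Type*} [AddCommMonoid β] {a : Finset α} (ha : a ⊆ s)
    (F : Finset α → β) :
    ∑ b ∈ s.powerset, (if s \ a ⊆ b then F b else 0) = ∑ q ∈ a.powerset, F (s \ a ∪ q) := by
  rw [← sum_filter, ← Icc_eq_filter_powerset, Icc_eq_image_powerset sdiff_subset,
    Finset.sdiff_sdiff_eq_self ha, sum_image]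
  intro q hq q' hq' h
  rw [← sdiff_union_inter_eq_of_subset (s := s) (mem_powerset.mp hq),
    ← sdiff_union_inter_eq_of_subset (s := s) (mem_powerset.mp hq')]
  exact congrArg (· ∩ a) h

end Bernoulli

noncomputable def stoppedRatio (τ : Finset ℕ → ℕ) (b : Finset ℕ) : ℝ :=
  (1 + τ b) / (1 + #(b ∩ Icc 1 (τ b)))

lemma one_add_div_one_add_le_of_add_eq {x m t J : ℕ} (htm : t ≤ m) (hmJ : m ≤ J)
    (h : x + m = J + t) :
    (1 + J : ℝ) / (1 + x) ≤ (1 + m) / (1 + t) := by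
  have h' : (x : ℝ) + m = J + t := by exact_mod_cast h
  have hx : (x : ℝ) = J - m + t := by linarith
  have hJm : (m : ℝ) ≤ J := by exact_mod_cast hmJ
  have htm' : (t : ℝ) ≤ m := by exact_mod_cast htm
  rw [div_le_div_iff₀ (by positivity) (by positivity), hx]
  nlinarith [mul_nonneg (sub_nonneg.mpr hJm) (sub_nonneg.mpr htm')]

lemma stoppedRatio_sdiff_union_le {n : ℕ} {a q : Finset ℕ} (hq : q ⊆ a)
    {τ : Finset ℕ → ℕ} (hτn : ∀ b, τ b ≤ n) :
    stoppedRatio τ (Icc 1 n \ a ∪ q) ≤ revRatio a q (τ (Icc 1 n \ a ∪ q)) := by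
  set J := τ (Icc 1 n \ a ∪ q)
  have hI : Icc 1 J ⊆ Icc 1 n := Icc_subset_Icc_right (hτn _)
  have hsplit : (Icc 1 n \ a ∪ q) ∩ Icc 1 J = (Icc 1 J \ a) ∪ (q ∩ Icc 1 J) := by
    ext x; simp only [mem_inter, mem_union, mem_sdiff]; have := @hI x; tauto
  have hcard : #((Icc 1 n \ a ∪ q) ∩ Icc 1 J) + #(a ∩ Icc 1 J) = J + #(q ∩ Icc 1 J) := by
    rw [hsplit, card_union_of_disjoint (disjoint_sdiff_self_left.mono_right
      (inter_subset_left.trans hq)), add_right_comm, inter_comm a, card_sdiff_add_card_inter,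
      Nat.card_Icc, Nat.add_sub_cancel]
  have := one_add_div_one_add_le_of_add_eq (card_le_card (inter_subset_inter_right hq))
    ((card_le_card inter_subset_right).trans (Nat.card_Icc 1 J).le) hcard
  simpa [stoppedRatio, revRatio] using this

theorem sum_bernoulliWeight_mul_stoppedRatio_le {n : ℕ} {ρ : ℝ} (hρ : 0 < ρ) {r : ℕ → ℝ}
    (hr : ∀ i, ρ ≤ r i) (hr1 : ∀ i, r i ≤ 1) {τ : Finset ℕ → ℕ} (hτn : ∀ b, τ b ≤ n)
    (hτ : IsRevStoppingRule n τ) :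
    ∑ b ∈ (Icc 1 n).powerset, bernoulliWeight (Icc 1 n) r b * stoppedRatio τ b ≤ ρ⁻¹ := by
  set s := Icc 1 n
  have hρ1 : ρ ≤ 1 := (hr 0).trans (hr1 0)
  -- if `ρ = 1` then every `r i = 1`, and the junk value `p i = 0` still fits
  set p : ℕ → ℝ := fun i => (1 - r i) / (1 - ρ)
  have hp0 (i : ℕ) : 0 ≤ p i := div_nonneg (by linarith [hr1 i]) (by linarith)
  have hp1 (i : ℕ) : p i ≤ 1 := div_le_one_of_le₀ (by linarith [hr i]) (by linarith)
  have hrp (i : ℕ) : r i = p i * ρ + (1 - p i) := by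
    rcases hρ1.eq_or_lt with rfl | hlt
    · simp [p, le_antisymm (hr1 i) (hr i)]
    · simp only [p]; field_simp; ring
  have hmixture (a) (ha : a ∈ s.powerset) :
      ∑ b ∈ s.powerset, (if s \ a ⊆ b then bernoulliWeight a (fun _ => ρ) b else 0)
        * stoppedRatio τ b ≤ ρ⁻¹ := by
    have ha := mem_powerset.mp ha
    calc _ = ∑ q ∈ a.powerset, ρ ^ #q * (1 - ρ) ^ (#a - #q) * stoppedRatio τ (s \ a ∪ q) := by
          simp only [ite_mul, zero_mul]
          rw [sum_powerset_ite_sdiff_subset ha]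
          refine sum_congr rfl fun q hq => ?_
          rw [bernoulliWeight_congr (b' := q) fun i hi => by simp [hi],
            bernoulliWeight_const_of_subset (mem_powerset.mp hq)]
      _ ≤ ∑ q ∈ a.powerset, ρ ^ #q * (1 - ρ) ^ (#a - #q) * revRatio a q (τ (s \ a ∪ q)) :=
          sum_le_sum fun q hq => mul_le_mul_of_nonneg_left
            (stoppedRatio_sdiff_union_le (mem_powerset.mp hq) hτn)
            (by have := sub_nonneg.mpr hρ1; positivity)
      _ ≤ ρ⁻¹ := sum_pow_mul_revRatio_le hρ hρ1 ha disjoint_sdiff_self_left hτn hτ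
  calc ∑ b ∈ s.powerset, bernoulliWeight s r b * stoppedRatio τ b
      = ∑ a ∈ s.powerset, bernoulliWeight s p a * ∑ b ∈ s.powerset,
          (if s \ a ⊆ b then bernoulliWeight a (fun _ => ρ) b else 0) * stoppedRatio τ b := by
        simp only [bernoulliWeight_eq_sum_mixture hrp, sum_mul, mul_sum, mul_assoc]
        exact sum_comm
    _ ≤ ∑ a ∈ s.powerset, bernoulliWeight s p a * ρ⁻¹ :=
        sum_le_sum fun a ha => mul_le_mul_of_nonneg_left (hmixture a ha)
          (bernoulliWeight_nonneg hp0 hp1 a)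
    _ = ρ⁻¹ := by rw [← sum_mul, sum_bernoulliWeight, one_mul]

lemma mem_iff_mem_of_measurableSet_sup_comap {Ω β γ ι : Type*} [MeasurableSpace β]
    [MeasurableSpace γ] {S : Ω → β} {B : ι → Ω → γ} {s : Finset ι} {T : Set Ω}
    (hT : MeasurableSet[MeasurableSpace.comap S inferInstance ⊔
      ⨆ i ∈ s, MeasurableSpace.comap (B i) inferInstance] T)
    {ω ω' : Ω} (hS : S ω = S ω') (hB : ∀ i ∈ s, B i ω = B i ω') : ω ∈ T ↔ ω' ∈ T := by
  let g : Ω → β × (s → γ) := fun ω => (S ω, fun i => B i ω)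
  have hle : MeasurableSpace.comap S inferInstance ⊔
      ⨆ i ∈ s, MeasurableSpace.comap (B i) inferInstance ≤ (⊤ : MeasurableSpace _).comap g := by
    refine sup_le ?_ (iSup₂_le fun i hi => ?_)
    · exact Measurable.comap_le ((measurable_from_top (f := Prod.fst)).comp (comap_measurable g))
    · exact Measurable.comap_le
        ((measurable_from_top (f := fun v : β × (s → γ) => v.2 ⟨i, hi⟩)).comp (comap_measurable g))
  obtain ⟨A, -, rfl⟩ := hle T hT
  show g ω ∈ A ↔ g ω' ∈ A
  rw [show g ω = g ω' from Prod.ext hS (funext fun i => hB i i.2)]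

lemma integral_comp_eq_sum {Ω β : Type*} [MeasurableSpace Ω] (μ : Measure Ω) [IsFiniteMeasure μ]
    {X : Ω → β} {T : Finset β} (hX : ∀ ω, X ω ∈ T) (hXm : ∀ b ∈ T, MeasurableSet (X ⁻¹' {b}))
    (g : β → ℝ) : ∫ ω, g (X ω) ∂μ = ∑ b ∈ T, μ.real (X ⁻¹' {b}) * g b := by
  have hpt (ω : Ω) : g (X ω) = ∑ b ∈ T, (X ⁻¹' {b}).indicator (fun _ => g b) ω := by
    rw [sum_eq_single_of_mem (X ω) (hX ω) fun b _ hb => by simp [Ne.symm hb]]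
    simp
  simp_rw [hpt]
  rw [integral_finsetSum _ fun b hb => (integrable_const _).indicator (hXm b hb)]
  exact sum_congr rfl fun b hb => by rw [integral_indicator_const _ (hXm b hb), smul_eq_mul]

lemma measureReal_preimage_ite {Ω : Type*} [MeasurableSpace Ω] {μ : Measure Ω}
    [IsProbabilityMeasure μ] {X : Ω → ℝ} (hX : Measurable X) (h01 : ∀ ω, X ω = 0 ∨ X ω = 1)
    {p : ℝ} (hp : 0 ≤ p) (hXp : μ {ω | X ω = 1} = ENNReal.ofReal p) (c : Prop) [Decidable c] :
    μ.real (X ⁻¹' {if c then 1 else 0}) = if c then p else 1 - p := by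
  have h1 : μ.real (X ⁻¹' {1}) = p := by
    rw [measureReal_def, show X ⁻¹' {1} = {ω | X ω = 1} from rfl, hXp, ENNReal.toReal_ofReal hp]
  split_ifs
  · exact h1
  · have h0 : X ⁻¹' {0} = (X ⁻¹' {1})ᶜ := by
      ext ω; rcases h01 ω with h | h <;> simp [h]
    rw [h0, probReal_compl_eq_one_sub (hX (measurableSet_singleton 1)), h1]

section Sampling

variable {Ω : Type*} {n : ℕ} {B : ℕ → Ω → ℝ}

noncomputable def successSet (n : ℕ) (B : ℕ → Ω → ℝ) (ω : Ω) : Finset ℕ :=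
  {i ∈ Icc 1 n | B i ω = 1}

lemma apply_eq_ite_mem_successSet (h01 : ∀ i ω, B i ω = 0 ∨ B i ω = 1) {i : ℕ} (hi : i ∈ Icc 1 n)
    (ω : Ω) : B i ω = if i ∈ successSet n B ω then 1 else 0 := by
  rcases h01 i ω with h | h <;> simp [successSet, hi, h]

lemma sum_Icc_eq_card_successSet_inter (h01 : ∀ i ω, B i ω = 0 ∨ B i ω = 1) {j : ℕ} (hj : j ≤ n)
    (ω : Ω) : ∑ i ∈ Icc 1 j, B i ω = #(successSet n B ω ∩ Icc 1 j) := by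
  rw [sum_congr rfl fun i hi => apply_eq_ite_mem_successSet h01 (Icc_subset_Icc_right hj hi) ω,
    sum_boole, filter_mem_eq_inter, inter_comm]

lemma successSet_preimage_singleton (h01 : ∀ i ω, B i ω = 0 ∨ B i ω = 1) {b : Finset ℕ}
    (hb : b ⊆ Icc 1 n) :
    successSet n B ⁻¹' {b} = ⋂ i ∈ Icc 1 n, B i ⁻¹' {if i ∈ b then 1 else 0} := by
  ext ω
  simp only [Set.mem_preimage, Set.mem_singleton_iff, Set.mem_iInter]
  refine ⟨fun h i hi => h ▸ apply_eq_ite_mem_successSet h01 hi ω, fun h => ?_⟩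
  ext i
  by_cases hi : i ∈ Icc 1 n
  · rw [successSet, mem_filter, h i hi]
    split_ifs with hib <;> simp [hi, hib]
  · simp only [successSet, mem_filter, hi, false_and, false_iff]
    exact fun h => hi (hb h)

lemma measurableSet_successSet_preimage [MeasurableSpace Ω] (hmeas : ∀ i, Measurable (B i))
    (h01 : ∀ i ω, B i ω = 0 ∨ B i ω = 1) {b : Finset ℕ} (hb : b ⊆ Icc 1 n) :
    MeasurableSet (successSet n B ⁻¹' {b}) := by
  rw [successSet_preimage_singleton h01 hb]
  exact Finset.measurableSet_biInter _ fun i _ => hmeas i (measurableSet_singleton _)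

lemma measureReal_successSet_preimage [MeasurableSpace Ω] {μ : Measure Ω}
    [IsProbabilityMeasure μ] (hmeas : ∀ i, Measurable (B i))
    (h01 : ∀ i ω, B i ω = 0 ∨ B i ω = 1) {r : ℕ → ℝ} (hr0 : ∀ i, 0 ≤ r i)
    (hber : ∀ i, μ {ω | B i ω = 1} = ENNReal.ofReal (r i)) (hindep : iIndepFun B μ)
    {b : Finset ℕ} (hb : b ⊆ Icc 1 n) :
    μ.real (successSet n B ⁻¹' {b}) = bernoulliWeight (Icc 1 n) r b := by
  rw [successSet_preimage_singleton h01 hb, measureReal_def,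
    hindep.measure_inter_preimage_eq_mul _ fun _ _ => measurableSet_singleton _,
    ENNReal.toReal_prod, bernoulliWeight]
  exact prod_congr rfl fun i _ =>
    measureReal_preimage_ite (hmeas i) (h01 i) (hr0 i) (hber i) (i ∈ b)

open scoped Classical in
/-- The largest `j ≤ n` such that `{j ≤ J}` meets the atom of `b` in the `j`-th reverse
σ-algebra. It agrees with `J` on realised success sets and, unlike `J`, is defined on all of
`Finset ℕ` as a reverse stopping rule. -/
noncomputable def revStoppingRule (n : ℕ) (B : ℕ → Ω → ℝ) (J : Ω → ℕ) (b : Finset ℕ) : ℕ :=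
  Nat.findGreatest (fun j => ∃ ω, j ≤ J ω ∧ SameRevInfo j (successSet n B ω) b) n

lemma revStoppingRule_le (J : Ω → ℕ) (b : Finset ℕ) : revStoppingRule n B J b ≤ n := by
  classical
  exact Nat.findGreatest_le n

lemma isRevStoppingRule_revStoppingRule (J : Ω → ℕ) :
    IsRevStoppingRule n (revStoppingRule n B J) := by
  classical
  intro j hj _ b b' hbb' hjτ
  obtain ⟨ω, hJω, hω⟩ := Nat.findGreatest_of_ne_zero rfl (by omega : revStoppingRule n B J b ≠ 0)
  exact hjτ.trans (Nat.le_findGreatest (revStoppingRule_le J b)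
    ⟨ω, hJω, hω.trans (hbb'.mono hjτ)⟩)

variable {S : ℕ → Ω → ℝ} {F : ℕ → MeasurableSpace Ω} {J : Ω → ℕ}

lemma eq_of_sameRevInfo_successSet (h01 : ∀ i ω, B i ω = 0 ∨ B i ω = 1)
    (hS : ∀ j ω, S j ω = ∑ i ∈ Icc 1 j, B i ω)
    (hF : ∀ j, F j = MeasurableSpace.comap (S j) inferInstance ⊔
      ⨆ i ∈ Ioc j n, MeasurableSpace.comap (B i) inferInstance)
    (hJn : ∀ ω, J ω ≤ n) (hJstop : ∀ j, MeasurableSet[F j] {ω | J ω = j}) {ω ω' : Ω}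
    (h : SameRevInfo (J ω) (successSet n B ω) (successSet n B ω')) : J ω' = J ω := by
  have hmeas := hJstop (J ω)
  rw [hF] at hmeas
  refine (mem_iff_mem_of_measurableSet_sup_comap hmeas ?_ fun i hi => ?_).mp rfl
  · rw [hS, hS, sum_Icc_eq_card_successSet_inter h01 (hJn ω),
      sum_Icc_eq_card_successSet_inter h01 (hJn ω), h.1]
  · obtain ⟨hJi, hin⟩ := mem_Ioc.mp hi
    have hmem : i ∈ successSet n B ω ↔ i ∈ successSet n B ω' := by
      simpa [hJi.not_ge] using congrArg (i ∈ ·) h.2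
    rw [apply_eq_ite_mem_successSet h01 (mem_Icc.mpr ⟨by omega, hin⟩),
      apply_eq_ite_mem_successSet h01 (mem_Icc.mpr ⟨by omega, hin⟩)]
    exact if_congr hmem rfl rfl

lemma revStoppingRule_successSet (h01 : ∀ i ω, B i ω = 0 ∨ B i ω = 1)
    (hS : ∀ j ω, S j ω = ∑ i ∈ Icc 1 j, B i ω)
    (hF : ∀ j, F j = MeasurableSpace.comap (S j) inferInstance ⊔
      ⨆ i ∈ Ioc j n, MeasurableSpace.comap (B i) inferInstance)
    (hJn : ∀ ω, J ω ≤ n) (hJstop : ∀ j, MeasurableSet[F j] {ω | J ω = j}) (ω : Ω) :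
    revStoppingRule n B J (successSet n B ω) = J ω := by
  classical
  refine Nat.findGreatest_eq_iff.mpr ⟨hJn ω, fun _ => ⟨ω, le_rfl, ⟨rfl, rfl⟩⟩, ?_⟩
  rintro k hk - ⟨ω', hkω', hω'⟩
  have := eq_of_sameRevInfo_successSet h01 hS hF hJn hJstop (hω'.mono hkω')
  omega

end Sampling

/-- Lemma 1 (independent, non-identical case): for independent Bernoulli(ρᵢ) variables
`B 1, ..., B n` with `min_i ρᵢ ≥ ρ > 0` and a stopping time `J` in reverse time with
respect to the reverse filtration `F j = σ(B 1 + ... + B j, B (j+1), ..., B n)`, one has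
`E[(1+J)/(1+B 1+...+B J)] ≤ ρ⁻¹`. -/
theorem reverse_stopping_time_bound_indep
    {Ω : Type*} [MeasurableSpace Ω] (μ : Measure Ω) [IsProbabilityMeasure μ]
    (n : ℕ) (ρ : ℝ) (hρ : 0 < ρ) (B : ℕ → Ω → ℝ)
    (hmeas : ∀ i, Measurable (B i))
    (h01 : ∀ i ω, B i ω = 0 ∨ B i ω = 1)
    (ρi : ℕ → ℝ) (hρi : ∀ i, ρ ≤ ρi i)
    (hber : ∀ i, μ {ω | B i ω = 1} = ENNReal.ofReal (ρi i))
    (hindep : iIndepFun B μ)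
    (S : ℕ → Ω → ℝ) (hS : ∀ j ω, S j ω = ∑ i ∈ Finset.Icc 1 j, B i ω)
    (F : ℕ → MeasurableSpace Ω)
    (hF : ∀ j, F j = MeasurableSpace.comap (S j) inferInstance ⊔
        ⨆ i ∈ Finset.Ioc j n, MeasurableSpace.comap (B i) inferInstance)
    (J : Ω → ℕ) (hJrange : ∀ ω, 1 ≤ J ω ∧ J ω ≤ n)
    (hJstop : ∀ j, MeasurableSet[F j] {ω | J ω = j}) :
    ∫ ω, (1 + (J ω : ℝ)) / (1 + S (J ω) ω) ∂μ ≤ ρ⁻¹ := by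
  have hρi0 (i : ℕ) : 0 ≤ ρi i := hρ.le.trans (hρi i)
  have hρi1 (i : ℕ) : ρi i ≤ 1 := ENNReal.ofReal_le_one.mp (hber i ▸ prob_le_one)
  have hJn (ω : Ω) : J ω ≤ n := (hJrange ω).2
  set τ := revStoppingRule n B J
  have hτ (ω : Ω) : τ (successSet n B ω) = J ω :=
    revStoppingRule_successSet h01 hS hF hJn hJstop ω
  calc ∫ ω, (1 + (J ω : ℝ)) / (1 + S (J ω) ω) ∂μ
      = ∫ ω, stoppedRatio τ (successSet n B ω) ∂μ := by
        refine integral_congr_ae (ae_of_all _ fun ω => ?_)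
        dsimp only
        rw [stoppedRatio, hτ, hS, sum_Icc_eq_card_successSet_inter h01 (hJn ω)]
    _ = ∑ b ∈ (Icc 1 n).powerset, μ.real (successSet n B ⁻¹' {b}) * stoppedRatio τ b :=
        integral_comp_eq_sum μ (fun ω => mem_powerset.mpr (filter_subset _ _))
          (fun b hb => measurableSet_successSet_preimage hmeas h01 (mem_powerset.mp hb)) _
    _ = ∑ b ∈ (Icc 1 n).powerset, bernoulliWeight (Icc 1 n) ρi b * stoppedRatio τ b :=
        sum_congr rfl fun b hb => by
          rw [measureReal_successSet_preimage hmeas h01 hρi0 hber hindep (mem_powerset.mp hb)]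
    _ ≤ ρ⁻¹ := sum_bernoulliWeight_mul_stoppedRatio_le hρ hρi hρi1 (revStoppingRule_le J)
        (isRevStoppingRule_revStoppingRule J)
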